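/- arXiv:1008.2420 — 3 statements merged into one kernel-verified Lean document; each statement's English description precedes it below -/
import Mathlib

section
/- Let 0 < α < 1 and let τ_α be a generalized gamma subordinator with Lévy exponent ψ_α(ω) = (1+ω)^α − 1. If γ_{(1−α)/α} is an independent Gamma((1−α)/α, 1) variable, then τ_α(γ_{(1−α)/α}) has the Gamma(1−α, 1) distribution. -/
open MeasureTheory ProbabilityTheory

/-- A (two-point) generalized gamma subordinator of index `β`: an increasing process
started at `0` with independent increments whose increments over `[s,t]` have Laplace
transform `e^{-(t-s)((1+ω)^β - 1)}`. -/
def IsGGSubordinator {Ω : Type*} [MeasurableSpace Ω] (P : Measure Ω)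
    (τ : Ω → ℝ → ℝ) (β : ℝ) : Prop :=
  Measurable (fun a => τ a) ∧
  (∀ a, τ a 0 = 0) ∧ (∀ a, Monotone (τ a)) ∧
  (∀ s t : ℝ, 0 ≤ s → s ≤ t →
    IndepFun (fun a => τ a s) (fun a => τ a t - τ a s) P) ∧
  (∀ s t ω : ℝ, 0 ≤ s → s ≤ t → 0 ≤ ω →
    ∫ a, Real.exp (-ω * (τ a t - τ a s)) ∂P = Real.exp (-(t - s) * ((1 + ω) ^ β - 1)))

open Real Set Filter Topology Polynomial

/-!
Conditionally on `γ = t`, `E e^{-ω τ(t)} = e^{-t ψ(ω)}` with `ψ(ω) = (1 + ω)^α - 1`; averaging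
over `γ ~ Gamma(c, 1)`, `c = (1 - α)/α`, gives `(1 + ψ(ω))^{-c} = (1 + ω)^{-αc} = (1 + ω)^{-(1-α)}`,
the Laplace transform of `Gamma(1 - α, 1)`. Laplace transforms determine laws on `[0, ∞)`: after
the substitution `y = e^{-x}` they become moments of laws on `[0, 1]`, and polynomials are dense
in `C([0, 1])`.

Conditioning requires `τ(γ)` to be a measurable function of the pair `(τ, γ)`, which evaluation is
not. The right limit of `τ` along rationals is, and it agrees with `τ(γ)` a.s.: `τ` has no fixed
discontinuities, since `u ↦ E e^{-τ(u)} = e^{-u ψ(1)}` is continuous, and `γ` is independent of `τ`.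
-/

namespace MeasureTheory.Measure

theorem ext_of_integral_pow_eq_of_ae_mem_Icc {μ ν : Measure ℝ} [IsFiniteMeasure μ]
    [IsFiniteMeasure ν] {a b : ℝ} (hμ : ∀ᵐ x ∂μ, x ∈ Icc a b) (hν : ∀ᵐ x ∂ν, x ∈ Icc a b)
    (h : ∀ n : ℕ, ∫ x, x ^ n ∂μ = ∫ x, x ^ n ∂ν) : μ = ν := by
  have hint {ρ : Measure ℝ} [IsFiniteMeasure ρ] (hρ : ∀ᵐ x ∂ρ, x ∈ Icc a b) {g : ℝ → ℝ}
      (hg : Continuous g) : Integrable g ρ := by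
    rw [← restrict_eq_self_of_ae_mem hρ]
    exact hg.continuousOn.integrableOn_compact isCompact_Icc
  have hpoly (p : ℝ[X]) : ∫ x, p.eval x ∂μ = ∫ x, p.eval x ∂ν := by
    simp_rw [eval_eq_sum_range]
    rw [integral_finsetSum _ fun i _ => (hint hμ (continuous_pow i)).const_mul _,
      integral_finsetSum _ fun i _ => (hint hν (continuous_pow i)).const_mul _]
    simp_rw [integral_const_mul, h]
  have happrox {ρ : Measure ℝ} [IsFiniteMeasure ρ] (hρ : ∀ᵐ x ∂ρ, x ∈ Icc a b)
      {g : ℝ → ℝ} (hg : Continuous g) {p : ℝ[X]} {ε : ℝ}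
      (hp : ∀ x ∈ Icc a b, |p.eval x - g x| < ε) :
      dist (∫ x, g x ∂ρ) (∫ x, p.eval x ∂ρ) ≤ ε * ρ.real univ := by
    rw [dist_eq_norm, ← integral_sub (hint hρ hg) (hint hρ p.continuous)]
    refine norm_integral_le_of_norm_le_const ?_
    filter_upwards [hρ] with x hx
    rw [Real.norm_eq_abs, abs_sub_comm]
    exact (hp x hx).le
  refine ext_of_forall_integral_eq_of_IsFiniteMeasure fun g =>
    eq_of_forall_dist_le fun ε hε => ?_
  set M := μ.real univ + ν.real univ + 1
  have hM : 0 < M := by positivity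
  obtain ⟨p, hp⟩ := exists_polynomial_near_of_continuousOn a b g g.continuous.continuousOn
    (ε / M) (by positivity)
  calc dist (∫ x, g x ∂μ) (∫ x, g x ∂ν)
      ≤ dist (∫ x, g x ∂μ) (∫ x, p.eval x ∂μ) + dist (∫ x, g x ∂ν) (∫ x, p.eval x ∂ν) := by
        rw [hpoly p, dist_comm (∫ x, g x ∂ν)]
        exact dist_triangle _ _ _
    _ ≤ ε / M * μ.real univ + ε / M * ν.real univ :=
        add_le_add (happrox hμ g.continuous hp) (happrox hν g.continuous hp)
    _ ≤ ε := by
        rw [← mul_add, div_mul_eq_mul_div, div_le_iff₀ hM]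
        exact mul_le_mul_of_nonneg_left (lt_add_one _).le hε.le

theorem ext_of_integral_exp_neg_nat_mul_eq {μ ν : Measure ℝ} [IsFiniteMeasure μ]
    [IsFiniteMeasure ν] (hμ : ∀ᵐ x ∂μ, 0 ≤ x) (hν : ∀ᵐ x ∂ν, 0 ≤ x)
    (h : ∀ n : ℕ, ∫ x, exp (-(n * x)) ∂μ = ∫ x, exp (-(n * x)) ∂ν) : μ = ν := by
  have hf : MeasurableEmbedding fun x : ℝ => exp (-x) :=
    (by fun_prop : Measurable fun x : ℝ => exp (-x)).measurableEmbedding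
      (fun x y hxy => neg_injective (exp_injective hxy))
  have hIcc {ρ : Measure ℝ} (hρ : ∀ᵐ x ∂ρ, 0 ≤ x) :
      ∀ᵐ y ∂ρ.map fun x => exp (-x), y ∈ Icc 0 1 := by
    rw [hf.ae_map_iff]
    filter_upwards [hρ] with x hx
    exact ⟨(exp_pos _).le, exp_le_one_iff.mpr (neg_nonpos.mpr hx)⟩
  rw [← hf.comap_map μ, ← hf.comap_map ν]
  congr 1
  refine ext_of_integral_pow_eq_of_ae_mem_Icc (hIcc hμ) (hIcc hν) fun n => ?_
  rw [hf.integral_map, hf.integral_map]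
  simpa only [← exp_nat_mul, mul_neg] using h n

end MeasureTheory.Measure

lemma gammaMeasure_Iic_zero (a r : ℝ) : gammaMeasure a r (Iic 0) = 0 := by
  rw [gammaMeasure, withDensity_apply _ measurableSet_Iic,
    lintegral_Iic_eq_lintegral_Iio_add_Icc _ le_rfl, lintegral_gammaPDF_of_nonpos le_rfl,
    Icc_self, setLIntegral_measure_zero _ _ (measure_singleton 0), add_zero]

lemma ae_pos_gammaMeasure (a r : ℝ) : ∀ᵐ x ∂gammaMeasure a r, 0 < x :=
  measure_mono_null (fun x (hx : ¬0 < x) => not_lt.mp hx) (gammaMeasure_Iic_zero a r)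

lemma measurable_gammaPDF (a r : ℝ) : Measurable (gammaPDF a r) :=
  (measurable_gammaPDFReal a r).ennreal_ofReal

lemma integral_exp_neg_mul_gammaMeasure {a r s : ℝ} (ha : 0 < a) (hr : 0 < r) (hs : -r < s) :
    ∫ x, exp (-(s * x)) ∂gammaMeasure a r = (r / (r + s)) ^ a := by
  have hrs : 0 < r + s := by linarith
  -- `e^{-sx}` turns the density of `Gamma(a, r)` into a multiple of that of `Gamma(a, r + s)`
  have key (x : ℝ) : gammaPDF a r x * ENNReal.ofReal (exp (-(s * x)))
      = ENNReal.ofReal ((r / (r + s)) ^ a) * gammaPDF a (r + s) x := by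
    rcases lt_or_ge x 0 with hx | hx
    · rw [gammaPDF_of_neg hx, gammaPDF_of_neg hx, zero_mul, mul_zero]
    rw [gammaPDF_of_nonneg hx, gammaPDF_of_nonneg hx, ← ENNReal.ofReal_mul (by positivity),
      ← ENNReal.ofReal_mul (by positivity), div_rpow hr.le hrs.le]
    congr 1
    rw [show -((r + s) * x) = -(r * x) + -(s * x) by ring, exp_add]
    field_simp
  rw [integral_eq_lintegral_of_nonneg_ae (ae_of_all _ fun x => (exp_pos _).le)
      (by fun_prop : Measurable fun x : ℝ => exp (-(s * x))).aestronglyMeasurable,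
    gammaMeasure, lintegral_withDensity_eq_lintegral_mul _ (measurable_gammaPDF a r)
      (by fun_prop : Measurable fun x : ℝ => exp (-(s * x))).ennreal_ofReal]
  simp only [Pi.mul_apply]
  rw [lintegral_congr key, lintegral_const_mul _ (measurable_gammaPDF a (r + s)),
    lintegral_gammaPDF_eq_one ha hrs, mul_one, ENNReal.toReal_ofReal (by positivity)]

namespace ProbabilityTheory.IndepFun

variable {Ω α β : Type*} [MeasurableSpace Ω] [MeasurableSpace α] [MeasurableSpace β]
  {P : Measure Ω} [IsFiniteMeasure P] {X : Ω → α} {Y : Ω → β}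

lemma ae_of_ae_ae (hXY : IndepFun X Y P) (hX : AEMeasurable X P) (hY : AEMeasurable Y P)
    {p : α → β → Prop} (hp : MeasurableSet {z : α × β | p z.1 z.2})
    (h : ∀ᵐ y ∂P.map Y, ∀ᵐ a ∂P, p (X a) y) : ∀ᵐ a ∂P, p (X a) (Y a) := by
  rw [← ae_map_iff (hX.prodMk hY) hp, hXY.map_prod_eq_prod_map_map hX hY,
    Measure.ae_prod_iff_ae_ae hp, Measure.ae_ae_comm hp]
  filter_upwards [h] with y hy
  exact (ae_map_iff hX (measurable_prodMk_right hp)).mpr hy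

lemma integral_comp_eq_integral_integral (hXY : IndepFun X Y P)
    (hX : AEMeasurable X P) (hY : AEMeasurable Y P) {Φ : α × β → ℝ} (hΦ : Measurable Φ)
    {C : ℝ} (hΦC : ∀ z, |Φ z| ≤ C) :
    ∫ a, Φ (X a, Y a) ∂P = ∫ y, ∫ a, Φ (X a, y) ∂P ∂P.map Y := by
  rw [← integral_map (hX.prodMk hY) hΦ.aestronglyMeasurable,
    hXY.map_prod_eq_prod_map_map hX hY,
    integral_prod_symm _ (Integrable.of_bound hΦ.aestronglyMeasurable C (ae_of_all _ hΦC))]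
  refine integral_congr_ae (ae_of_all _ fun y => ?_)
  exact integral_map hX (hΦ.comp measurable_prodMk_right).aestronglyMeasurable

end ProbabilityTheory.IndepFun

/-- The right limit `f (t+)` of a monotone `f ≥ 0`, taken along rationals so that it is jointly
measurable in `(f, t)`, which the evaluation `(f, t) ↦ f t` is not. Negative values of `f` are
truncated to `0` by `ENNReal.ofReal`. -/
noncomputable def ratRightLim (f : ℝ → ℝ) (t : ℝ) : ℝ :=
  (⨅ q : ℚ, if t < q then ENNReal.ofReal (f q) else ⊤).toReal

noncomputable def ratLeftLim (f : ℝ → ℝ) (t : ℝ) : ℝ :=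
  (⨆ q : ℚ, if (q : ℝ) < t then ENNReal.ofReal (f q) else 0).toReal

lemma measurable_ratRightLim : Measurable fun p : (ℝ → ℝ) × ℝ => ratRightLim p.1 p.2 := by
  refine (Measurable.iInf fun q => Measurable.ite ?_ ?_ measurable_const).ennreal_toReal
  · exact measurableSet_lt measurable_snd measurable_const
  · exact ((measurable_pi_apply (q : ℝ)).comp measurable_fst).ennreal_ofReal

lemma measurable_ratLeftLim : Measurable fun p : (ℝ → ℝ) × ℝ => ratLeftLim p.1 p.2 := by
  refine (Measurable.iSup fun q => Measurable.ite ?_ ?_ measurable_const).ennreal_toReal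
  · exact measurableSet_lt measurable_const measurable_snd
  · exact ((measurable_pi_apply (q : ℝ)).comp measurable_fst).ennreal_ofReal

namespace Monotone

variable {f : ℝ → ℝ} {t u : ℝ}

lemma ratRightLim_le (hf : Monotone f) (ht : 0 ≤ f t) (htu : t < u) :
    ratRightLim f t ≤ f u := by
  obtain ⟨q, htq, hqu⟩ := exists_rat_btwn htu
  refine ENNReal.toReal_le_of_le_ofReal (ht.trans (hf htu.le)) ((iInf_le _ q).trans ?_)
  rw [if_pos htq]
  exact ENNReal.ofReal_le_ofReal (hf hqu.le)

lemma le_ratRightLim (hf : Monotone f) : f t ≤ ratRightLim f t := by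
  refine ENNReal.ofReal_le_iff_le_toReal ?_ |>.mp (le_iInf fun q => ?_)
  · obtain ⟨q, htq⟩ := exists_rat_gt t
    refine ne_top_of_le_ne_top (ENNReal.ofReal_ne_top (r := f q)) ((iInf_le _ q).trans ?_)
    rw [if_pos htq]
  · split_ifs with htq
    · exact ENNReal.ofReal_le_ofReal (hf htq.le)
    · exact le_top

lemma ratLeftLim_le (hf : Monotone f) (ht : 0 ≤ f t) : ratLeftLim f t ≤ f t := by
  refine ENNReal.toReal_le_of_le_ofReal ht (iSup_le fun q => ?_)
  split_ifs with hqt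
  · exact ENNReal.ofReal_le_ofReal (hf hqt.le)
  · exact zero_le

lemma le_ratLeftLim (hf : Monotone f) (hut : u < t) : f u ≤ ratLeftLim f t := by
  obtain ⟨q, huq, hqt⟩ := exists_rat_btwn hut
  have hsup :
      (⨆ q : ℚ, if (q : ℝ) < t then ENNReal.ofReal (f q) else 0) ≤ ENNReal.ofReal (f t) :=
    iSup_le fun r => by
      split_ifs with hrt
      · exact ENNReal.ofReal_le_ofReal (hf hrt.le)
      · exact zero_le
  refine ENNReal.ofReal_le_iff_le_toReal (ne_top_of_le_ne_top ENNReal.ofReal_ne_top hsup) |>.mp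
    (le_trans ?_ (le_iSup _ q))
  rw [if_pos hqt]
  exact ENNReal.ofReal_le_ofReal (hf huq.le)

lemma ratRightLim_eq_of_ratLeftLim_eq (hf : Monotone f) (ht : 0 ≤ f t)
    (h : ratLeftLim f t = ratRightLim f t) : ratRightLim f t = f t :=
  le_antisymm (h ▸ hf.ratLeftLim_le ht) hf.le_ratRightLim

end Monotone

lemma integrable_exp_neg_of_nonneg {Ω : Type*} [MeasurableSpace Ω] {P : Measure Ω}
    [IsFiniteMeasure P] {X : Ω → ℝ} (hX : Measurable X) (h0 : ∀ a, 0 ≤ X a) :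
    Integrable (fun a => exp (-X a)) P := by
  refine Integrable.of_bound (hX.neg.exp).aestronglyMeasurable 1 (ae_of_all _ fun a => ?_)
  rw [norm_of_nonneg (exp_pos _).le, exp_le_one_iff, neg_nonpos]
  exact h0 a

namespace IsGGSubordinator

variable {Ω : Type*} [MeasurableSpace Ω] {P : Measure Ω} {τ : Ω → ℝ → ℝ} {β : ℝ}

lemma measurable (hτ : IsGGSubordinator P τ β) : Measurable fun a => τ a := hτ.1

lemma monotone (hτ : IsGGSubordinator P τ β) (a : Ω) : Monotone (τ a) := hτ.2.2.1 a

lemma measurable_apply (hτ : IsGGSubordinator P τ β) (t : ℝ) : Measurable fun a => τ a t :=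
  (measurable_pi_apply t).comp hτ.measurable

lemma nonneg (hτ : IsGGSubordinator P τ β) {t : ℝ} (ht : 0 ≤ t) (a : Ω) : 0 ≤ τ a t :=
  hτ.2.1 a ▸ hτ.monotone a ht

lemma integral_exp_neg_mul (hτ : IsGGSubordinator P τ β) {t ω : ℝ} (ht : 0 ≤ t)
    (hω : 0 ≤ ω) :
    ∫ a, exp (-(ω * τ a t)) ∂P = exp (-(((1 + ω) ^ β - 1) * t)) := by
  simpa [hτ.2.1, neg_mul, mul_comm] using hτ.2.2.2.2 0 t ω le_rfl ht hω

lemma ae_ratLeftLim_eq_ratRightLim [IsProbabilityMeasure P] (hτ : IsGGSubordinator P τ β)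
    {t : ℝ} (ht : 0 < t) : ∀ᵐ a ∂P, ratLeftLim (τ a) t = ratRightLim (τ a) t := by
  set L := fun a => ratLeftLim (τ a) t
  set G := fun a => ratRightLim (τ a) t
  have hLm : Measurable L := measurable_ratLeftLim.comp (hτ.measurable.prodMk measurable_const)
  have hGm : Measurable G := measurable_ratRightLim.comp (hτ.measurable.prodMk measurable_const)
  have hL0 (a : Ω) : 0 ≤ L a := ENNReal.toReal_nonneg
  have hG0 (a : Ω) : 0 ≤ G a := ENNReal.toReal_nonneg
  have hLG (a : Ω) : L a ≤ G a :=
    ((hτ.monotone a).ratLeftLim_le (hτ.nonneg ht.le a)).trans ((hτ.monotone a).le_ratRightLim)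
  have hexp (u : ℝ) (hu : 0 ≤ u) : ∫ a, exp (-τ a u) ∂P = exp (-((2 ^ β - 1) * u)) := by
    simpa [one_add_one_eq_two] using hτ.integral_exp_neg_mul hu zero_le_one
  have hcont : Continuous fun u : ℝ => exp (-((2 ^ β - 1) * u)) := by fun_prop
  have hG : exp (-((2 ^ β - 1) * t)) ≤ ∫ a, exp (-G a) ∂P := by
    refine le_of_tendsto (hcont.continuousWithinAt (s := Ioi t)).tendsto ?_
    filter_upwards [self_mem_nhdsWithin] with u (hu : t < u)
    rw [← hexp u (ht.trans hu).le]
    refine integral_mono (integrable_exp_neg_of_nonneg (hτ.measurable_apply u)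
      (hτ.nonneg (ht.trans hu).le)) (integrable_exp_neg_of_nonneg hGm hG0) fun a => ?_
    exact exp_le_exp.mpr (neg_le_neg ((hτ.monotone a).ratRightLim_le (hτ.nonneg ht.le a) hu))
  have hL : ∫ a, exp (-L a) ∂P ≤ exp (-((2 ^ β - 1) * t)) := by
    refine ge_of_tendsto (hcont.continuousWithinAt (s := Iio t)).tendsto ?_
    filter_upwards [Ioo_mem_nhdsLT ht] with u hu
    rw [← hexp u hu.1.le]
    refine integral_mono (integrable_exp_neg_of_nonneg hLm hL0)
      (integrable_exp_neg_of_nonneg (hτ.measurable_apply u) (hτ.nonneg hu.1.le)) fun a => ?_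
    exact exp_le_exp.mpr (neg_le_neg ((hτ.monotone a).le_ratLeftLim hu.2))
  have hGL (a : Ω) : exp (-G a) ≤ exp (-L a) := exp_le_exp.mpr (neg_le_neg (hLG a))
  have hintG := integrable_exp_neg_of_nonneg hGm hG0 (P := P)
  have hintL := integrable_exp_neg_of_nonneg hLm hL0 (P := P)
  have hae : (fun a => exp (-G a)) =ᵐ[P] fun a => exp (-L a) :=
    (integral_eq_iff_of_ae_le hintG hintL (ae_of_all _ hGL)).mp
      (le_antisymm (integral_mono hintG hintL hGL) (hL.trans hG))
  filter_upwards [hae] with a ha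
  exact (neg_injective (exp_injective ha)).symm

lemma ae_ratRightLim_eq [IsProbabilityMeasure P] (hτ : IsGGSubordinator P τ β) {t : ℝ}
    (ht : 0 < t) : ∀ᵐ a ∂P, ratRightLim (τ a) t = τ a t := by
  filter_upwards [hτ.ae_ratLeftLim_eq_ratRightLim ht] with a ha
  exact (hτ.monotone a).ratRightLim_eq_of_ratLeftLim_eq (hτ.nonneg ht.le a) ha

variable [IsProbabilityMeasure P] {γ : Ω → ℝ}

lemma ae_apply_eq_ratRightLim_of_indepFun (hτ : IsGGSubordinator P τ β)
    (hγ : AEMeasurable γ P) (hind : IndepFun (fun a => τ a) γ P) (hγpos : ∀ᵐ a ∂P, 0 < γ a) :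
    (fun a => τ a (γ a)) =ᵐ[P] fun a => ratRightLim (τ a) (γ a) := by
  have hLG : ∀ᵐ a ∂P, ratLeftLim (τ a) (γ a) = ratRightLim (τ a) (γ a) := by
    refine hind.ae_of_ae_ae hτ.measurable.aemeasurable hγ
      (p := fun f t => ratLeftLim f t = ratRightLim f t)
      (measurableSet_eq_fun measurable_ratLeftLim measurable_ratRightLim) ?_
    filter_upwards [(ae_map_iff hγ (measurableSet_lt measurable_const measurable_id)).mpr hγpos]
      with t ht
    exact hτ.ae_ratLeftLim_eq_ratRightLim ht
  filter_upwards [hLG, hγpos] with a hLGa hγa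
  exact ((hτ.monotone a).ratRightLim_eq_of_ratLeftLim_eq (hτ.nonneg hγa.le a) hLGa).symm

lemma integral_exp_neg_mul_apply_of_indepFun (hτ : IsGGSubordinator P τ β)
    (hγ : AEMeasurable γ P) (hind : IndepFun (fun a => τ a) γ P) (hγpos : ∀ᵐ a ∂P, 0 < γ a)
    {ω : ℝ} (hω : 0 ≤ ω) :
    ∫ a, exp (-(ω * τ a (γ a))) ∂P = ∫ t, exp (-(((1 + ω) ^ β - 1) * t)) ∂P.map γ := by
  have hΦ : Measurable fun p : (ℝ → ℝ) × ℝ => exp (-(ω * ratRightLim p.1 p.2)) :=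
    (measurable_ratRightLim.const_mul ω).neg.exp
  have hΦ1 (p : (ℝ → ℝ) × ℝ) : |exp (-(ω * ratRightLim p.1 p.2))| ≤ 1 := by
    rw [abs_of_pos (exp_pos _), exp_le_one_iff, neg_nonpos]
    exact mul_nonneg hω ENNReal.toReal_nonneg
  calc ∫ a, exp (-(ω * τ a (γ a))) ∂P
      = ∫ a, exp (-(ω * ratRightLim (τ a) (γ a))) ∂P := by
        refine integral_congr_ae ?_
        filter_upwards [hτ.ae_apply_eq_ratRightLim_of_indepFun hγ hind hγpos] with a ha
        rw [ha]
    _ = ∫ t, ∫ a, exp (-(ω * ratRightLim (τ a) t)) ∂P ∂P.map γ :=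
        hind.integral_comp_eq_integral_integral hτ.measurable.aemeasurable hγ hΦ hΦ1
    _ = ∫ t, exp (-(((1 + ω) ^ β - 1) * t)) ∂P.map γ := by
        refine integral_congr_ae ?_
        filter_upwards [(ae_map_iff hγ (measurableSet_lt measurable_const measurable_id)).mpr
          hγpos] with t (ht : 0 < t)
        rw [← hτ.integral_exp_neg_mul ht.le hω]
        refine integral_congr_ae ?_
        filter_upwards [hτ.ae_ratRightLim_eq ht] with a ha
        rw [ha]

end IsGGSubordinator

theorem stmt4_general {Ω : Type*} [MeasureSpace Ω] [IsProbabilityMeasure (ℙ : Measure Ω)]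
    (α : ℝ) (hα0 : 0 < α) (hα1 : α < 1)
    (τ : Ω → ℝ → ℝ) (hτ : IsGGSubordinator ℙ τ α)
    (γ : Ω → ℝ)
    (hγ : Measure.map γ ℙ = gammaMeasure ((1 - α) / α) 1)
    (hind : IndepFun (fun a => τ a) γ ℙ) :
    Measure.map (fun a => τ a (γ a)) ℙ = gammaMeasure (1 - α) 1 := by
  have hc : 0 < (1 - α) / α := div_pos (by linarith) hα0
  have hγm : AEMeasurable γ ℙ := AEMeasurable.of_map_ne_zero <| by
    rw [hγ]; exact (isProbabilityMeasure_gammaMeasure hc one_pos).ne_zero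
  have hγpos : ∀ᵐ a ∂ℙ, 0 < γ a :=
    (ae_map_iff hγm (measurableSet_lt measurable_const measurable_id)).mp
      (hγ ▸ ae_pos_gammaMeasure _ _)
  have hτγ : AEMeasurable (fun a => τ a (γ a)) ℙ :=
    (measurable_ratRightLim.comp_aemeasurable (hτ.measurable.aemeasurable.prodMk hγm)).congr
      (hτ.ae_apply_eq_ratRightLim_of_indepFun hγm hind hγpos).symm
  have := isProbabilityMeasure_gammaMeasure (show 0 < 1 - α by linarith) one_pos
  have := Measure.isProbabilityMeasure_map hτγ
  refine Measure.ext_of_integral_exp_neg_nat_mul_eq ?_ ((ae_pos_gammaMeasure _ _).mono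
    fun x hx => hx.le) fun n => ?_
  · refine (ae_map_iff hτγ (measurableSet_le measurable_const measurable_id)).mpr ?_
    filter_upwards [hγpos] with a ha
    exact hτ.nonneg ha.le a
  have hn : (0 : ℝ) ≤ n := n.cast_nonneg
  have hψ : -1 < (1 + (n : ℝ)) ^ α - 1 := by
    linarith [one_le_rpow (by linarith : (1 : ℝ) ≤ 1 + n) hα0.le]
  rw [integral_map hτγ (by fun_prop), hτ.integral_exp_neg_mul_apply_of_indepFun hγm hind hγpos hn,
    hγ, integral_exp_neg_mul_gammaMeasure hc one_pos hψ,
    integral_exp_neg_mul_gammaMeasure (by linarith) one_pos (by linarith), add_sub_cancel,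
    div_rpow zero_le_one (by positivity), one_rpow, ← rpow_mul (by positivity),
    mul_div_cancel₀ _ hα0.ne', div_rpow zero_le_one (by positivity), one_rpow]

/-- If `τ_α` is a generalized gamma subordinator of index `α`, independent of
`γ ~ Gamma((1-α)/α, 1)`, then `τ_α(γ) ~ Gamma(1-α, 1)`. -/
theorem stmt4 {Ω : Type*} [MeasureSpace Ω] [IsProbabilityMeasure (ℙ : Measure Ω)]
    (α : ℝ) (hα0 : 0 < α) (hα1 : α < 1)
    (τ : Ω → ℝ → ℝ) (hτ : IsGGSubordinator ℙ τ α)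
    (γ : Ω → ℝ) (hγm : Measurable γ)
    (hγ : Measure.map γ ℙ = gammaMeasure ((1 - α) / α) 1)
    (hind : IndepFun (fun a => τ a) γ ℙ) :
    Measure.map (fun a => τ a (γ a)) ℙ = gammaMeasure (1 - α) 1 :=
  stmt4_general α hα0 hα1 τ hτ γ hγ hind
end

section
/- Let 0 < α < 1, let ζ > 0 be fixed, let τ_α be a generalized gamma subordinator with Lévy exponent (1+ω)^α − 1, and let γ_1 ∼ Exp(1) be independent of τ_α. Then γ_1 / τ_α(ζ) =^d ζ^{−1/α}(γ_1 + ζ)^{1/α} − 1. -/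
/-!
Conditionally on `X`, the event `G / X > x` is `G > x X`, of probability `e^{-x X}` when
`G ~ Exp(1)`; averaging over `X`, the tail of `G / X` at `x ≥ 0` is the Laplace transform
`e^{-ζ((1+x)^α - 1)}` of `X` at `x`. On the other side, `ζ^{-1/α}(g + ζ)^{1/α} - 1 > x` solves to
`g > ζ((1+x)^α - 1)`, so the transformed exponential variable has the same tail. Both laws are
carried by `[0, ∞)`, so equal tails there determine them.
-/

open MeasureTheory ProbabilityTheory Set

lemma MeasureTheory.Measure.ext_of_Ioi_of_ae_nonneg {μ ν : Measure ℝ} [IsProbabilityMeasure μ]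
    [IsProbabilityMeasure ν] (hμ : ∀ᵐ y ∂μ, 0 ≤ y) (hν : ∀ᵐ y ∂ν, 0 ≤ y)
    (h : ∀ x, 0 ≤ x → μ (Ioi x) = ν (Ioi x)) : μ = ν := by
  have measure_Ioi_of_neg {ρ : Measure ℝ} [IsProbabilityMeasure ρ] (hρ : ∀ᵐ y ∂ρ, 0 ≤ y)
      {x : ℝ} (hx : x < 0) : ρ (Ioi x) = 1 := by
    rw [← prob_compl_eq_zero_iff measurableSet_Ioi, compl_Ioi]
    exact measure_mono_null (fun y hy => not_le.2 (lt_of_le_of_lt hy hx)) (ae_iff.1 hρ)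
  have tail (x : ℝ) : μ (Ioi x) = ν (Ioi x) := by
    rcases le_or_gt 0 x with hx | hx
    · exact h x hx
    · rw [measure_Ioi_of_neg hμ hx, measure_Ioi_of_neg hν hx]
  refine Measure.ext_of_Iic μ ν fun x => ?_
  rw [← compl_Ioi, prob_compl_eq_one_sub measurableSet_Ioi,
    prob_compl_eq_one_sub measurableSet_Ioi, tail]

namespace ProbabilityTheory

lemma ae_nonneg_expMeasure (r : ℝ) : ∀ᵐ x ∂expMeasure r, 0 ≤ x := by
  simp only [ae_iff, not_le]
  exact (withDensity_apply _ measurableSet_Iio).trans (lintegral_exponentialPDF_of_nonpos le_rfl)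

lemma expMeasure_Ioi {r t : ℝ} (hr : 0 < r) (ht : 0 ≤ t) :
    expMeasure r (Ioi t) = ENNReal.ofReal (Real.exp (-(r * t))) := by
  have := isProbabilityMeasure_expMeasure hr
  have hexp_le : Real.exp (-(r * t)) ≤ 1 := Real.exp_le_one_iff.2 (by nlinarith)
  rw [← compl_Iic, prob_compl_eq_one_sub measurableSet_Iic, ← ofReal_cdf, cdf_expMeasure_eq hr,
    if_pos ht, ← ENNReal.ofReal_one, ← ENNReal.ofReal_sub _ (by linarith), sub_sub_cancel]

lemma measure_lt_div_eq_integral_exp {Ω : Type*} [MeasurableSpace Ω] {μ : Measure Ω}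
    [IsProbabilityMeasure μ] {r : ℝ} (hr : 0 < r) {G X : Ω → ℝ} (hGm : Measurable G)
    (hXm : Measurable X) (hG : μ.map G = expMeasure r) (hX : ∀ᵐ a ∂μ, 0 < X a)
    (hind : IndepFun G X μ) {x : ℝ} (hx : 0 ≤ x) :
    μ {a | x < G a / X a} = ENNReal.ofReal (∫ a, Real.exp (-(r * x) * X a) ∂μ) := by
  set S : Set (ℝ × ℝ) := {p | x * p.2 < p.1}
  have hS : MeasurableSet S := measurableSet_lt (measurable_const.mul measurable_snd) measurable_fst
  have hevent : {a | x < G a / X a} =ᵐ[μ] (fun a => (G a, X a)) ⁻¹' S := by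
    rw [Filter.eventuallyEq_set]
    filter_upwards [hX] with a ha
    exact lt_div_iff₀ ha
  have hcond : ∀ᵐ t ∂μ.map X,
      μ.map G ((fun g => (g, t)) ⁻¹' S) = ENNReal.ofReal (Real.exp (-(r * x) * t)) := by
    filter_upwards [(ae_map_iff hXm.aemeasurable measurableSet_Ioi).2 hX] with t (ht : 0 < t)
    rw [hG, neg_mul, mul_assoc, ← expMeasure_Ioi hr (mul_nonneg hx ht.le)]
    rfl
  have hint : Integrable (fun a => Real.exp (-(r * x) * X a)) μ := by
    refine Integrable.of_bound (by fun_prop) 1 ?_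
    filter_upwards [hX] with a ha
    rw [Real.norm_of_nonneg (Real.exp_pos _).le, Real.exp_le_one_iff]
    nlinarith [mul_nonneg hr.le hx]
  calc μ {a | x < G a / X a} = μ.map (fun a => (G a, X a)) S := by
        rw [measure_congr hevent, Measure.map_apply (hGm.prodMk hXm) hS]
    _ = ∫⁻ t, μ.map G ((fun g => (g, t)) ⁻¹' S) ∂μ.map X := by
        rw [(indepFun_iff_map_prod_eq_prod_map_map hGm.aemeasurable hXm.aemeasurable).1 hind,
          Measure.prod_apply_symm hS]
    _ = ∫⁻ t, ENNReal.ofReal (Real.exp (-(r * x) * t)) ∂μ.map X := lintegral_congr_ae hcond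
    _ = ∫⁻ a, ENNReal.ofReal (Real.exp (-(r * x) * X a)) ∂μ := lintegral_map (by fun_prop) hXm
    _ = ENNReal.ofReal (∫ a, Real.exp (-(r * x) * X a) ∂μ) :=
        (ofReal_integral_eq_lintegral_ofReal hint (ae_of_all _ fun _ => (Real.exp_pos _).le)).symm

end ProbabilityTheory

lemma Real.rpow_neg_mul_rpow {a b : ℝ} (ha : 0 ≤ a) (hb : 0 ≤ b) (p : ℝ) :
    b ^ (-p) * a ^ p = (a / b) ^ p := by
  rw [Real.rpow_neg hb, Real.div_rpow ha hb, inv_mul_eq_div]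

lemma lt_rpow_transform_iff {α ζ x g : ℝ} (hα : 0 < α) (hζ : 0 < ζ) (hx : -1 < x)
    (hg : 0 ≤ g + ζ) :
    x < ζ ^ (-(1 / α)) * (g + ζ) ^ (1 / α) - 1 ↔ ζ * ((1 + x) ^ α - 1) < g := by
  rw [Real.rpow_neg_mul_rpow hg hζ.le, lt_sub_iff_add_lt, one_div,
    Real.lt_rpow_inv_iff_of_pos (by linarith) (div_nonneg hg hζ.le) hα, lt_div_iff₀ hζ,
    add_comm x 1]
  constructor <;> intro h <;> linarith

lemma rpow_transform_nonneg {α ζ g : ℝ} (hα : 0 < α) (hζ : 0 < ζ) (hg : 0 ≤ g) :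
    0 ≤ ζ ^ (-(1 / α)) * (g + ζ) ^ (1 / α) - 1 := by
  rw [Real.rpow_neg_mul_rpow (by linarith) hζ.le, sub_nonneg]
  exact Real.one_le_rpow ((le_div_iff₀ hζ).2 (by linarith)) (by positivity)

lemma expMeasure_map_rpow_transform_Ioi {α ζ x : ℝ} (hα : 0 < α) (hζ : 0 < ζ) (hx : 0 ≤ x) :
    (expMeasure 1).map (fun g => ζ ^ (-(1 / α)) * (g + ζ) ^ (1 / α) - 1) (Ioi x)
      = ENNReal.ofReal (Real.exp (-ζ * ((1 + x) ^ α - 1))) := by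
  have hpreimage : (fun g => ζ ^ (-(1 / α)) * (g + ζ) ^ (1 / α) - 1) ⁻¹' Ioi x
      =ᵐ[expMeasure 1] Ioi (ζ * ((1 + x) ^ α - 1)) := by
    filter_upwards [ae_nonneg_expMeasure 1] with g hg
    exact propext (lt_rpow_transform_iff hα hζ (by linarith) (by linarith))
  have hthreshold : 0 ≤ ζ * ((1 + x) ^ α - 1) :=
    mul_nonneg hζ.le (sub_nonneg.2 (Real.one_le_rpow (by linarith) hα.le))
  rw [Measure.map_apply (by fun_prop) measurableSet_Ioi, measure_congr hpreimage,
    expMeasure_Ioi one_pos hthreshold, one_mul, neg_mul]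

theorem stmt8_general {Ω : Type*} [MeasureSpace Ω] [IsProbabilityMeasure (ℙ : Measure Ω)]
    (α ζ : ℝ) (hα0 : 0 < α) (hζ : 0 < ζ)
    (G X : Ω → ℝ) (hGm : Measurable G) (hXm : Measurable X)
    (hG : Measure.map G ℙ = expMeasure 1)
    (hXpos : ∀ᵐ a ∂ℙ, 0 < X a)
    (hXlap : ∀ ω : ℝ, 0 ≤ ω →
      ∫ a, Real.exp (-ω * X a) ∂ℙ = Real.exp (-ζ * ((1 + ω) ^ α - 1)))
    (hind : IndepFun G X ℙ) :
    Measure.map (fun a => G a / X a) ℙ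
      = (expMeasure 1).map (fun g => ζ ^ (-(1 / α)) * (g + ζ) ^ (1 / α) - 1) := by
  have := isProbabilityMeasure_expMeasure one_pos
  have hGX : Measurable fun a => G a / X a := hGm.div hXm
  have hf : Measurable fun g : ℝ => ζ ^ (-(1 / α)) * (g + ζ) ^ (1 / α) - 1 := by fun_prop
  have := Measure.isProbabilityMeasure_map (μ := ℙ) hGX.aemeasurable
  have := Measure.isProbabilityMeasure_map (μ := expMeasure 1) hf.aemeasurable
  have hGnn : ∀ᵐ a ∂ℙ, 0 ≤ G a := ae_of_ae_map hGm.aemeasurable (hG ▸ ae_nonneg_expMeasure 1)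
  refine Measure.ext_of_Ioi_of_ae_nonneg ?_ ?_ fun x hx => ?_
  · refine (ae_map_iff hGX.aemeasurable measurableSet_Ici).2 ?_
    filter_upwards [hGnn, hXpos] with a hGa hXa
    exact div_nonneg hGa hXa.le
  · refine (ae_map_iff hf.aemeasurable measurableSet_Ici).2 ?_
    filter_upwards [ae_nonneg_expMeasure 1] with g hg
    exact rpow_transform_nonneg hα0 hζ hg
  · rw [Measure.map_apply hGX measurableSet_Ioi, expMeasure_map_rpow_transform_Ioi hα0 hζ hx,
      ← hXlap x hx]
    have htail := measure_lt_div_eq_integral_exp one_pos hGm hXm hG hXpos hind hx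
    rwa [one_mul] at htail

/-- Let `0 < α < 1`, `ζ > 0`, let `G ~ Exp(1)` be independent of `X = τ_α(ζ)`, a positive
random variable with Laplace transform `E[e^{-ωX}] = e^{-ζ((1+ω)^α - 1)}`.  Then
`G / X =ᵈ ζ^{-1/α}(G + ζ)^{1/α} - 1`. -/
theorem stmt8 {Ω : Type*} [MeasureSpace Ω] [IsProbabilityMeasure (ℙ : Measure Ω)]
    (α ζ : ℝ) (hα0 : 0 < α) (hα1 : α < 1) (hζ : 0 < ζ)
    (G X : Ω → ℝ) (hGm : Measurable G) (hXm : Measurable X)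
    (hG : Measure.map G ℙ = expMeasure 1)
    (hXpos : ∀ᵐ a ∂ℙ, 0 < X a)
    (hXlap : ∀ ω : ℝ, 0 ≤ ω →
      ∫ a, Real.exp (-ω * X a) ∂ℙ = Real.exp (-ζ * ((1 + ω) ^ α - 1)))
    (hind : IndepFun G X ℙ) :
    Measure.map (fun a => G a / X a) ℙ
      = (expMeasure 1).map (fun g => ζ ^ (-(1 / α)) * (g + ζ) ^ (1 / α) - 1) :=
  stmt8_general α ζ hα0 hζ G X hGm hXm hG hXpos hXlap hind
end

section
/- Let s_1 ∈ (0,1), s_0 = 1 − s_1, let U_1 be uniform on [0,1], and define the simple bridge b(y) = s_0 y + s_1·1{U_1 ≤ y} for y ∈ [0,1], with right-continuous inverse b^{−1}(r) = inf{v ∈ [0,1] : b(v) > r}. If U' is uniform on [0,1] independent of U_1, then P(b^{−1}(U') = U_1) = s_1, and conditionally on b^{−1}(U') ≠ U_1, the random variable b^{−1}(U') is uniform on [0,1]. -/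
/-!
Write `s₀ = 1 - s₁`. For `u ∈ [0,1]` and `r ∈ [0,1)` the inverse has the closed form
`max (min (r / s₀) u) ((r - s₁) / s₀)`: it is `r / s₀` below the jump interval
`[s₀ u, s₀ u + s₁]`, equal to `u` on it, and `(r - s₁) / s₀` above it. So given `U₁ = u`, the
event `b⁻¹(U') = u` is `U' ∈ [s₀ u, s₀ u + s₁]`, of probability `s₁`, while
`b⁻¹(U') ≤ y, b⁻¹(U') ≠ u` is `U'` lying in `[0, s₀ min u y]` or in `(s₀ u + s₁, s₀ y + s₁]`,
of total probability `s₀ y`. Fubini over the independent pair `(U₁, U')` concludes.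
-/

open MeasureTheory ProbabilityTheory

/-- Right-continuous inverse of the simple bridge `b(v) = (1-s₁)v + s₁·1{u ≤ v}`
with a single atom of mass `s₁` at location `u`. -/
noncomputable def simpleBridgeInv (s₁ u r : ℝ) : ℝ :=
  sInf {v : ℝ | v ∈ Set.Icc (0 : ℝ) 1 ∧ r < (1 - s₁) * v + s₁ * (if u ≤ v then 1 else 0)}

open Set

namespace MeasureTheory

lemma Measure.prod_apply_of_ae_slice_eq {α β : Type*} [MeasurableSpace α]
    [MeasurableSpace β] {μ : Measure α} {ν : Measure β} [SFinite ν] {s : Set (α × β)}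
    (hs : MeasurableSet s) {c : ENNReal} (h : ∀ᵐ x ∂μ, ν (Prod.mk x ⁻¹' s) = c) :
    μ.prod ν s = c * μ univ := by
  rw [Measure.prod_apply hs, lintegral_congr_ae h, lintegral_const]

lemma ae_mem_Ico_of_map_eq_restrict_Icc {Ω : Type*} [MeasurableSpace Ω] {μ : Measure Ω}
    {X : Ω → ℝ} (hX : Measurable X) {a b : ℝ} (h : μ.map X = volume.restrict (Icc a b)) :
    ∀ᵐ ω ∂μ, X ω ∈ Ico a b := by
  refine ae_of_ae_map hX.aemeasurable ?_
  rw [h, Measure.restrict_congr_set Ico_ae_eq_Icc.symm]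
  exact ae_restrict_mem measurableSet_Ico

end MeasureTheory

noncomputable def simpleBridge (s₁ u v : ℝ) : ℝ := (1 - s₁) * v + s₁ * if u ≤ v then 1 else 0

noncomputable def simpleBridgeInvFormula (s₁ u r : ℝ) : ℝ :=
  max (min (r / (1 - s₁)) u) ((r - s₁) / (1 - s₁))

section Bridge

variable {s₁ u r v y : ℝ}

lemma simpleBridgeInv_eq_sInf :
    simpleBridgeInv s₁ u r = sInf {v | v ∈ Icc 0 1 ∧ r < simpleBridge s₁ u v} := rfl

lemma simpleBridgeInvFormula_le_of_lt_simpleBridge (hs : s₁ ∈ Ico 0 1)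
    (hv : r < simpleBridge s₁ u v) : simpleBridgeInvFormula s₁ u r ≤ v := by
  have hs₀ : 0 < 1 - s₁ := by linarith [hs.2]
  unfold simpleBridge at hv
  refine max_le ?_ ?_
  · split_ifs at hv with huv
    · exact min_le_of_right_le huv
    · exact min_le_of_left_le ((div_le_iff₀ hs₀).2 (by linarith))
  · rw [div_le_iff₀ hs₀]
    split_ifs at hv <;> linarith [hs.1]

lemma lt_simpleBridge_of_simpleBridgeInvFormula_lt (hs : s₁ ∈ Ico 0 1)
    (hv : simpleBridgeInvFormula s₁ u r < v) : r < simpleBridge s₁ u v := by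
  have hs₀ : 0 < 1 - s₁ := by linarith [hs.2]
  unfold simpleBridgeInvFormula at hv
  rw [max_lt_iff, min_lt_iff, div_lt_iff₀ hs₀, div_lt_iff₀ hs₀] at hv
  obtain ⟨hv | huv, hv'⟩ := hv
  · unfold simpleBridge
    have : 0 ≤ s₁ * if u ≤ v then (1:ℝ) else 0 := mul_nonneg hs.1 (by split_ifs <;> norm_num)
    linarith
  · rw [simpleBridge, if_pos huv.le]
    linarith

lemma simpleBridgeInv_eq_formula (hs : s₁ ∈ Ico 0 1) (hu : u ∈ Icc 0 1) (hr : r ∈ Ico 0 1) :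
    simpleBridgeInv s₁ u r = simpleBridgeInvFormula s₁ u r := by
  have hs₀ : 0 < 1 - s₁ := by linarith [hs.2]
  have one_mem : (1 : ℝ) ∈ {v | v ∈ Icc 0 1 ∧ r < simpleBridge s₁ u v} :=
    ⟨right_mem_Icc.2 zero_le_one, by rw [simpleBridge, if_pos hu.2]; linarith [hr.2]⟩
  have formula_nonneg : 0 ≤ simpleBridgeInvFormula s₁ u r :=
    le_max_of_le_left (le_min (div_nonneg hr.1 hs₀.le) hu.1)
  rw [simpleBridgeInv_eq_sInf]
  refine csInf_eq_of_forall_ge_of_forall_gt_exists_lt ⟨1, one_mem⟩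
    (fun v hv => simpleBridgeInvFormula_le_of_lt_simpleBridge hs hv.2) fun w hw => ?_
  set G := simpleBridgeInvFormula s₁ u r
  rcases le_or_gt 1 ((G + w) / 2) with h | h
  · exact ⟨1, one_mem, by linarith⟩
  · exact ⟨(G + w) / 2, ⟨⟨by linarith, h.le⟩,
      lt_simpleBridge_of_simpleBridgeInvFormula_lt hs (by linarith)⟩, by linarith⟩

lemma continuous_simpleBridgeInvFormula :
    Continuous fun p : ℝ × ℝ => simpleBridgeInvFormula s₁ p.1 p.2 := by
  unfold simpleBridgeInvFormula; fun_prop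

lemma simpleBridgeInvFormula_of_le (hs : s₁ ∈ Ico 0 1) (h : r ≤ (1 - s₁) * u) :
    simpleBridgeInvFormula s₁ u r = r / (1 - s₁) := by
  have hs₀ : 0 < 1 - s₁ := by linarith [hs.2]
  have hru : r / (1 - s₁) ≤ u := (div_le_iff₀ hs₀).2 (by linarith)
  rw [simpleBridgeInvFormula, min_eq_left hru, max_eq_left]
  exact div_le_div_of_nonneg_right (by linarith [hs.1]) hs₀.le

lemma simpleBridgeInvFormula_of_mem_Icc (hs : s₁ ∈ Ico 0 1)
    (h : r ∈ Icc ((1 - s₁) * u) ((1 - s₁) * u + s₁)) : simpleBridgeInvFormula s₁ u r = u := by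
  have hs₀ : 0 < 1 - s₁ := by linarith [hs.2]
  have hur : u ≤ r / (1 - s₁) := (le_div_iff₀ hs₀).2 (by linarith [h.1])
  rw [simpleBridgeInvFormula, min_eq_right hur, max_eq_left]
  exact (div_le_iff₀ hs₀).2 (by linarith [h.2])

lemma simpleBridgeInvFormula_of_ge (hs : s₁ ∈ Ico 0 1) (h : (1 - s₁) * u + s₁ ≤ r) :
    simpleBridgeInvFormula s₁ u r = (r - s₁) / (1 - s₁) := by
  have hs₀ : 0 < 1 - s₁ := by linarith [hs.2]
  have hur : u ≤ (r - s₁) / (1 - s₁) := (le_div_iff₀ hs₀).2 (by linarith)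
  rw [simpleBridgeInvFormula, max_eq_right (min_le_of_right_le hur)]

lemma simpleBridgeInvFormula_eq_self_iff (hs : s₁ ∈ Ico 0 1) :
    simpleBridgeInvFormula s₁ u r = u ↔ r ∈ Icc ((1 - s₁) * u) ((1 - s₁) * u + s₁) := by
  have hs₀ : 0 < 1 - s₁ := by linarith [hs.2]
  refine ⟨fun h => ?_, simpleBridgeInvFormula_of_mem_Icc hs⟩
  by_contra hr
  rw [mem_Icc, not_and_or, not_le, not_le] at hr
  rcases hr with hr | hr
  · rw [simpleBridgeInvFormula_of_le hs hr.le, div_eq_iff hs₀.ne'] at h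
    linarith
  · rw [simpleBridgeInvFormula_of_ge hs hr.le, div_eq_iff hs₀.ne'] at h
    linarith

lemma simpleBridgeInvFormula_le_and_ne_iff (hs : s₁ ∈ Ico 0 1) :
    simpleBridgeInvFormula s₁ u r ≤ y ∧ simpleBridgeInvFormula s₁ u r ≠ u ↔
      r < (1 - s₁) * u ∧ r ≤ (1 - s₁) * y ∨ (1 - s₁) * u + s₁ < r ∧ r ≤ (1 - s₁) * y + s₁ := by
  have hs₀ : 0 < 1 - s₁ := by linarith [hs.2]
  rcases lt_or_ge r ((1 - s₁) * u) with hlow | hlow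
  · rw [simpleBridgeInvFormula_of_le hs hlow.le, div_le_iff₀ hs₀, ne_eq, div_eq_iff hs₀.ne']
    constructor
    · rintro ⟨h, -⟩; exact Or.inl ⟨hlow, by linarith⟩
    · rintro (⟨-, h⟩ | ⟨h, -⟩)
      · exact ⟨by linarith, by linarith⟩
      · linarith [hs.1]
  rcases le_or_gt r ((1 - s₁) * u + s₁) with hmid | hhigh
  · rw [simpleBridgeInvFormula_of_mem_Icc hs ⟨hlow, hmid⟩]
    constructor
    · rintro ⟨-, h⟩; exact absurd rfl h
    · rintro (⟨h, -⟩ | ⟨h, -⟩) <;> linarith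
  · rw [simpleBridgeInvFormula_of_ge hs hhigh.le, div_le_iff₀ hs₀, ne_eq, div_eq_iff hs₀.ne']
    constructor
    · rintro ⟨h, -⟩; exact Or.inr ⟨hhigh, by linarith⟩
    · rintro (⟨h, -⟩ | ⟨-, h⟩)
      · linarith
      · exact ⟨by linarith, by linarith⟩

lemma volume_restrict_Icc_setOf_simpleBridgeInvFormula_eq_self (hs : s₁ ∈ Ico 0 1)
    (hu : u ∈ Icc 0 1) :
    volume.restrict (Icc 0 1) {r | simpleBridgeInvFormula s₁ u r = u} = ENNReal.ofReal s₁ := by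
  have hs₀ : 0 < 1 - s₁ := by linarith [hs.2]
  have hjump : Icc ((1 - s₁) * u) ((1 - s₁) * u + s₁) ⊆ Icc 0 1 :=
    Icc_subset_Icc (mul_nonneg hs₀.le hu.1) (by nlinarith [hu.2])
  simp_rw [simpleBridgeInvFormula_eq_self_iff hs, ofPred_mem_eq]
  rw [Measure.restrict_apply measurableSet_Icc, inter_eq_left.2 hjump, Real.volume_Icc,
    add_sub_cancel_left]

lemma volume_restrict_Icc_setOf_simpleBridgeInvFormula_le_and_ne (hs : s₁ ∈ Ico 0 1)
    (hu : u ∈ Icc 0 1) (hy : y ∈ Icc 0 1) :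
    volume.restrict (Icc 0 1)
      {r | simpleBridgeInvFormula s₁ u r ≤ y ∧ simpleBridgeInvFormula s₁ u r ≠ u}
      = ENNReal.ofReal (y * (1 - s₁)) := by
  have hs₀ : 0 < 1 - s₁ := by linarith [hs.2]
  have hu₀ : 0 ≤ (1 - s₁) * u := mul_nonneg hs₀.le hu.1
  have hy₁ : (1 - s₁) * y + s₁ ≤ 1 := by nlinarith [hy.2]
  simp_rw [simpleBridgeInvFormula_le_and_ne_iff hs]
  rw [Measure.restrict_apply' measurableSet_Icc]
  rcases le_or_gt u y with huy | hyu
  · have hset : {r | r < (1 - s₁) * u ∧ r ≤ (1 - s₁) * y ∨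
          (1 - s₁) * u + s₁ < r ∧ r ≤ (1 - s₁) * y + s₁} ∩ Icc 0 1
        = Ico 0 ((1 - s₁) * u) ∪ Ioc ((1 - s₁) * u + s₁) ((1 - s₁) * y + s₁) := by
      have : (1 - s₁) * u ≤ (1 - s₁) * y := by nlinarith
      ext r
      simp only [mem_inter_iff, mem_ofPred_eq, mem_Icc, mem_union, mem_Ico, mem_Ioc]
      constructor
      · rintro ⟨⟨h₁, -⟩ | h, h₀, -⟩
        exacts [Or.inl ⟨h₀, h₁⟩, Or.inr h]
      · rintro (⟨h₀, h₁⟩ | ⟨h₁, h₂⟩)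
        exacts [⟨Or.inl ⟨h₁, by linarith⟩, h₀, by linarith [hs.1]⟩,
          ⟨Or.inr ⟨h₁, h₂⟩, by linarith [hs.1], by linarith⟩]
    rw [hset, measure_union ?_ measurableSet_Ioc, Real.volume_Ico,
      Real.volume_Ioc, ← ENNReal.ofReal_add (by linarith) (by nlinarith)]
    · ring_nf
    · exact disjoint_left.2 fun r h₁ h₂ => by linarith [h₁.2, h₂.1, hs.1]
  · have hset : {r | r < (1 - s₁) * u ∧ r ≤ (1 - s₁) * y ∨
          (1 - s₁) * u + s₁ < r ∧ r ≤ (1 - s₁) * y + s₁} ∩ Icc 0 1 = Icc 0 ((1 - s₁) * y) := by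
      have : (1 - s₁) * y < (1 - s₁) * u := by nlinarith
      ext r
      simp only [mem_inter_iff, mem_ofPred_eq, mem_Icc]
      constructor
      · rintro ⟨⟨-, h₁⟩ | ⟨h₁, h₂⟩, h₀, -⟩
        exacts [⟨h₀, h₁⟩, absurd h₂ (by linarith)]
      · rintro ⟨h₀, h₁⟩
        exact ⟨Or.inl ⟨by linarith, h₁⟩, h₀, by linarith [hs.1]⟩
    rw [hset, Real.volume_Icc, sub_zero, mul_comm]

end Bridge

/-- For the simple bridge with atom of mass `s₁ ∈ (0,1)` at an independent uniform
location `U₁`, and `U'` an independent uniform: `P(b⁻¹(U') = U₁) = s₁`, and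
conditionally on `b⁻¹(U') ≠ U₁`, the random variable `b⁻¹(U')` is uniform on `[0,1]`
(i.e. `P(b⁻¹(U') ≤ y, b⁻¹(U') ≠ U₁) = y(1-s₁)` for `y ∈ [0,1]`). -/
theorem stmt16 {Ω : Type*} [MeasureSpace Ω] [IsProbabilityMeasure (ℙ : Measure Ω)]
    (s₁ : ℝ) (hs₁ : s₁ ∈ Set.Ioo (0 : ℝ) 1)
    (U₁ U' : Ω → ℝ) (hU₁m : Measurable U₁) (hU'm : Measurable U')
    (hU₁ : Measure.map U₁ ℙ = volume.restrict (Set.Icc (0 : ℝ) 1))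
    (hU' : Measure.map U' ℙ = volume.restrict (Set.Icc (0 : ℝ) 1))
    (hind : IndepFun U₁ U' ℙ) :
    ℙ {a | simpleBridgeInv s₁ (U₁ a) (U' a) = U₁ a} = ENNReal.ofReal s₁ ∧
    ∀ y ∈ Set.Icc (0 : ℝ) 1,
      ℙ {a | simpleBridgeInv s₁ (U₁ a) (U' a) ≤ y ∧ simpleBridgeInv s₁ (U₁ a) (U' a) ≠ U₁ a}
        = ENNReal.ofReal (y * (1 - s₁)) := by
  have hs : s₁ ∈ Ico 0 1 := Ioo_subset_Ico_self hs₁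
  set ν := volume.restrict (Icc (0 : ℝ) 1)
  have hX : Measurable fun a => (U₁ a, U' a) := hU₁m.prodMk hU'm
  have hlaw : Measure.map (fun a => (U₁ a, U' a)) ℙ = ν.prod ν := by
    rw [(indepFun_iff_map_prod_eq_prod_map_map hU₁m.aemeasurable hU'm.aemeasurable).1 hind,
      hU₁, hU']
  have hformula : ∀ᵐ a ∂ℙ,
      simpleBridgeInv s₁ (U₁ a) (U' a) = simpleBridgeInvFormula s₁ (U₁ a) (U' a) := by
    filter_upwards [ae_mem_Ico_of_map_eq_restrict_Icc hU₁m hU₁,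
      ae_mem_Ico_of_map_eq_restrict_Icc hU'm hU'] with a hu hr
    exact simpleBridgeInv_eq_formula hs (Ico_subset_Icc_self hu) hr
  have hevent (E : ℝ → ℝ → Prop)
      (hE : MeasurableSet {p : ℝ × ℝ | E (simpleBridgeInvFormula s₁ p.1 p.2) p.1}) :
      ℙ {a | E (simpleBridgeInv s₁ (U₁ a) (U' a)) (U₁ a)}
        = ν.prod ν {p | E (simpleBridgeInvFormula s₁ p.1 p.2) p.1} := by
    rw [← hlaw, Measure.map_apply hX hE]
    exact measure_congr (Filter.eventuallyEq_set.2 (hformula.mono fun a ha => by simp [ha]))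
  have hν : ∀ᵐ u ∂ν, u ∈ Icc (0 : ℝ) 1 := ae_restrict_mem measurableSet_Icc
  have hν_univ : ν univ = 1 := by simp [ν]
  have hG := (continuous_simpleBridgeInvFormula (s₁ := s₁)).measurable
  refine ⟨?_, fun y hy => ?_⟩
  · rw [hevent (· = ·) (measurableSet_eq_fun hG measurable_fst),
      Measure.prod_apply_of_ae_slice_eq (measurableSet_eq_fun hG measurable_fst)
        (hν.mono fun u hu => volume_restrict_Icc_setOf_simpleBridgeInvFormula_eq_self hs hu),
      hν_univ, mul_one]
  · have hE : MeasurableSet {p : ℝ × ℝ | simpleBridgeInvFormula s₁ p.1 p.2 ≤ y ∧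
        simpleBridgeInvFormula s₁ p.1 p.2 ≠ p.1} :=
      (measurableSet_le hG measurable_const).inter (measurableSet_eq_fun hG measurable_fst).compl
    rw [hevent (fun b u => b ≤ y ∧ b ≠ u) hE, Measure.prod_apply_of_ae_slice_eq hE
        (hν.mono fun u hu => volume_restrict_Icc_setOf_simpleBridgeInvFormula_le_and_ne hs hu hy),
      hν_univ, mul_one]
end
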